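/- arXiv:2009.08440 — 6 statements merged into one kernel-verified Lean document; each statement's English description precedes it below -/
import Mathlib

section
/- Let d ≥ 2 and let p ∈ ℝ^d be a probability vector with entries sorted in decreasing order p_1 ≥ p_2 ≥ … ≥ p_d ≥ 0. Let M be the real symmetric d×d matrix with entries M_{ij} = δ_{ij} p_i − p_i p_j (i.e., M = diag(p) − p pᵀ). Then the largest eigenvalue λ_max of M satisfies p_2 ≤ λ_max ≤ p_1. -/
/-!
All eigenvalues of a real symmetric `A` are at most `c` iff `c • 1 - A` is positive semidefinite,
i.e. iff `xᵀ A x ≤ c ‖x‖²` for all `x`. For `M = diag(p) - p pᵀ` the quadratic form is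
`xᵀ M x = ∑ pᵢ xᵢ² - (p ⬝ x)² ≤ p₁ ‖x‖²`, which gives `λ_max ≤ p₁`. Conversely, testing
`λ_max` against `x = e₁ - e₂` gives `2 λ_max ≥ p₁ + p₂ - (p₁ - p₂)² ≥ 2 p₂`, since
`0 ≤ p₁ - p₂ ≤ 1`.
-/

namespace Matrix

variable {n : Type*} [Fintype n] [DecidableEq n]

open scoped MatrixOrder in
theorem IsHermitian.eigenvalues_le_iff {A : Matrix n n ℝ} (hA : A.IsHermitian) (c : ℝ) :
    (∀ i, hA.eigenvalues i ≤ c) ↔ ∀ x, x ⬝ᵥ A *ᵥ x ≤ c * (x ⬝ᵥ x) := by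
  have hspec : (∀ i, hA.eigenvalues i ≤ c) ↔ ∀ μ ∈ spectrum ℝ A, μ ≤ c := by
    simp [hA.spectrum_real_eq_range_eigenvalues]
  have hherm : (c • 1 - A).IsHermitian := (isHermitian_one.smul (IsSelfAdjoint.all c)).sub hA
  rw [hspec, ← le_algebraMap_iff_spectrum_le hA.isSelfAdjoint, Algebra.algebraMap_eq_smul_one,
    le_iff, posSemidef_iff_dotProduct_mulVec]
  simp only [hherm, true_and, star_trivial, sub_mulVec, dotProduct_sub, sub_nonneg, smul_mulVec,
    one_mulVec, dotProduct_smul, smul_eq_mul]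

theorem dotProduct_diagonal_sub_vecMulVec_mulVec {R : Type*} [CommRing R] (p x : n → R) :
    x ⬝ᵥ (diagonal p - vecMulVec p p) *ᵥ x = ∑ i, p i * x i ^ 2 - (p ⬝ᵥ x) ^ 2 := by
  rw [sub_mulVec, dotProduct_sub, vecMulVec_mulVec, dotProduct_smul, op_smul_eq_mul,
    dotProduct_comm x p, sq]
  simp only [dotProduct, mulVec_diagonal]
  congr 2 with i
  ring

theorem dotProduct_diagonal_sub_vecMulVec_mulVec_le {p : n → ℝ} {c : ℝ}
    (hp : ∀ i, p i ≤ c) (x : n → ℝ) :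
    x ⬝ᵥ (diagonal p - vecMulVec p p) *ᵥ x ≤ c * (x ⬝ᵥ x) := by
  rw [dotProduct_diagonal_sub_vecMulVec_mulVec]
  calc ∑ i, p i * x i ^ 2 - (p ⬝ᵥ x) ^ 2 ≤ ∑ i, c * x i ^ 2 := by
        have := Finset.sum_le_sum fun i (_ : i ∈ Finset.univ) ↦
          mul_le_mul_of_nonneg_right (hp i) (sq_nonneg (x i))
        nlinarith [sq_nonneg (p ⬝ᵥ x)]
    _ = c * (x ⬝ᵥ x) := by simp only [dotProduct, Finset.mul_sum, sq]

theorem dotProduct_diagonal_sub_vecMulVec_mulVec_single_sub_single {R : Type*} [CommRing R]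
    (p : n → R) {i j : n} (hij : i ≠ j) :
    (Pi.single i 1 - Pi.single j 1) ⬝ᵥ (diagonal p - vecMulVec p p) *ᵥ
      (Pi.single i 1 - Pi.single j 1) = p i + p j - (p i - p j) ^ 2 := by
  rw [dotProduct_diagonal_sub_vecMulVec_mulVec]
  simp [dotProduct_sub, sub_sq, Pi.single_apply, mul_add, mul_sub, Finset.sum_add_distrib,
    Finset.sum_sub_distrib, hij.symm]

theorem IsHermitian.eigenvalues_diagonal_sub_vecMulVec_le {p : n → ℝ}
    (hA : (diagonal p - vecMulVec p p).IsHermitian) {c : ℝ} (hp : ∀ i, p i ≤ c) (k : n) :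
    hA.eigenvalues k ≤ c :=
  (hA.eigenvalues_le_iff c).mpr (dotProduct_diagonal_sub_vecMulVec_mulVec_le hp) k

theorem IsHermitian.le_of_eigenvalues_diagonal_sub_vecMulVec_le {p : n → ℝ}
    (hA : (diagonal p - vecMulVec p p).IsHermitian) {c : ℝ} (hc : ∀ k, hA.eigenvalues k ≤ c)
    {i j : n} (hij : i ≠ j) (hj : 0 ≤ p j) (hji : p j ≤ p i) (hi : p i ≤ 1) :
    p j ≤ c := by
  have h := (hA.eigenvalues_le_iff c).mp hc (Pi.single i 1 - Pi.single j 1)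
  have hnorm : (Pi.single i 1 - Pi.single j 1 : n → ℝ) ⬝ᵥ (Pi.single i 1 - Pi.single j 1) = 2 := by
    norm_num [dotProduct_sub, hij, hij.symm]
  rw [dotProduct_diagonal_sub_vecMulVec_mulVec_single_sub_single p hij, hnorm] at h
  nlinarith [mul_nonneg (sub_nonneg.mpr hji) (by linarith : 0 ≤ 1 - (p i - p j))]

end Matrix

/-- For a decreasingly sorted probability vector `p ∈ ℝ^d` (`d ≥ 2`),
the largest eigenvalue of the real symmetric matrix `M = diag(p) - p pᵀ` satisfies
`p 1 ≤ λ_max ≤ p 0`. -/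
theorem stmt1 (d : ℕ) (hd : 2 ≤ d) (p : Fin d → ℝ)
    (hnonneg : ∀ i, 0 ≤ p i) (hsum : ∑ i, p i = 1)
    (hsorted : ∀ i j : Fin d, i ≤ j → p j ≤ p i)
    (M : Matrix (Fin d) (Fin d) ℝ)
    (hM : M = Matrix.diagonal p - Matrix.vecMulVec p p)
    (hHerm : M.IsHermitian) :
    p ⟨1, by omega⟩ ≤
      Finset.univ.sup' (Finset.univ_nonempty_iff.mpr ⟨⟨0, by omega⟩⟩) hHerm.eigenvalues ∧
    Finset.univ.sup' (Finset.univ_nonempty_iff.mpr ⟨⟨0, by omega⟩⟩) hHerm.eigenvalues ≤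
      p ⟨0, by omega⟩ := by
  subst hM
  have hmax : ∀ i, p i ≤ p ⟨0, by omega⟩ := fun i ↦ hsorted _ i (Fin.le_def.mpr (Nat.zero_le _))
  have hle_one : p ⟨0, by omega⟩ ≤ 1 :=
    hsum ▸ Finset.single_le_sum (fun i _ ↦ hnonneg i) (Finset.mem_univ _)
  refine ⟨?_, Finset.sup'_le _ _ fun k _ ↦ hHerm.eigenvalues_diagonal_sub_vecMulVec_le hmax k⟩
  exact hHerm.le_of_eigenvalues_diagonal_sub_vecMulVec_le
    (fun k ↦ Finset.le_sup' _ (Finset.mem_univ k)) (by simp [Fin.ext_iff]) (hnonneg _)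
    (hmax _) hle_one
end

section
/- Let ρ be a d×d complex positive semidefinite matrix with trace 1, with orthonormal eigenbasis {|i⟩}_{i=1}^d and eigenvalues p_i ≥ 0, and let H be a d×d Hermitian matrix with matrix elements H_{ij} = ⟨i|H|j⟩. Define D := 2 Σ_{i≠j, p_i+p_j>0} (p_i p_j / (p_i + p_j)) |H_{ij}|² + [Σ_i p_i H_{ii}² − (Σ_i p_i H_{ii})²]. Then D ≥ 0, and D = 0 if and only if Π H Π = c Π for some real constant c, where Π = Σ_{i : p_i > 0} |i⟩⟨i| is the orthogonal projector onto the support of ρ. Equivalently, D = 0 if and only if H_{ij} = 0 for all i ≠ j with p_i > 0 and p_j > 0, and H_{ii} is constant over all i with p_i > 0. -/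
open scoped ComplexOrder

/-- The matrix element `⟨u|H|w⟩` of a matrix `H` between vectors `u` and `w` in `ℂ^d`. -/
noncomputable def matElem {d : ℕ} (H : Matrix (Fin d) (Fin d) ℂ) (u w : Fin d → ℂ) : ℂ :=
  dotProduct (star u) (H.mulVec w)

/-- The gap `D = Var[ρ,H] − (1/4) F_Q[ρ,H]`, written in terms of the eigenvalues `p`
and orthonormal eigenvectors `v` of `ρ`. -/
noncomputable def gapD {d : ℕ} (p : Fin d → ℝ) (v : Fin d → Fin d → ℂ)
    (H : Matrix (Fin d) (Fin d) ℂ) : ℝ :=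
  2 * ∑ i, ∑ j,
      (if i ≠ j ∧ 0 < p i + p j then
        p i * p j / (p i + p j) * (‖matElem H (v i) (v j)‖) ^ 2
      else 0) +
    ((∑ i, p i * ((matElem H (v i) (v i)).re) ^ 2) -
      (∑ i, p i * (matElem H (v i) (v i)).re) ^ 2)

/-- The orthogonal projector `Π = Σ_{i : p i > 0} |v i⟩⟨v i|` onto the support of `ρ`. -/
noncomputable def suppProj {d : ℕ} (p : Fin d → ℝ) (v : Fin d → Fin d → ℂ) :
    Matrix (Fin d) (Fin d) ℂ :=
  ∑ i ∈ Finset.univ.filter (fun i => 0 < p i), Matrix.vecMulVec (v i) (star (v i))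

/-!
The gap splits into two nonnegative parts: twice the sum of the off-diagonal terms
`p i p j / (p i + p j) |H i j|²`, which vanishes exactly when `H i j = 0` for `i ≠ j` in the
support, and the `p`-weighted variance `Σ p i (H i i - m)²` of the diagonal around its mean
`m`, which vanishes exactly when `H i i` is constant on the support. In the orthonormal frame
`Π H Π = Σ_{i,j ∈ supp} H i j |i⟩⟨j|` and `c Π = Σ_{i ∈ supp} c |i⟩⟨i|`, so comparing
coefficients turns `Π H Π = c Π` into the same two conditions; `c` is real since `H` is
Hermitian.
-/

open Finset Matrix

section WeightedVariance

variable {ι : Type*} [Fintype ι] {p : ι → ℝ}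

lemma sum_mul_sq_sub_sq_sum_mul (hsum : ∑ i, p i = 1) (h : ι → ℝ) :
    ∑ i, p i * h i ^ 2 - (∑ i, p i * h i) ^ 2 = ∑ i, p i * (h i - ∑ j, p j * h j) ^ 2 := by
  set m := ∑ j, p j * h j
  have hexpand (i : ι) :
      p i * (h i - m) ^ 2 = p i * h i ^ 2 - 2 * m * (p i * h i) + m ^ 2 * p i := by
    ring
  simp only [hexpand, sum_add_distrib, sum_sub_distrib, ← mul_sum, hsum]
  ring

lemma sum_mul_sq_sub_eq_zero_iff (hp : ∀ i, 0 ≤ p i) (h : ι → ℝ) (c : ℝ) :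
    ∑ i, p i * (h i - c) ^ 2 = 0 ↔ ∀ i, 0 < p i → h i = c := by
  rw [Fintype.sum_eq_zero_iff_of_nonneg fun i => mul_nonneg (hp i) (sq_nonneg _), funext_iff]
  refine forall_congr' fun i => ?_
  simp [(hp i).lt_iff_ne', sub_eq_zero, or_iff_not_imp_left, eq_comm]

lemma sum_mul_eq_of_forall_pos (hp : ∀ i, 0 ≤ p i) (hsum : ∑ i, p i = 1)
    {h : ι → ℝ} {c : ℝ} (hc : ∀ i, 0 < p i → h i = c) : ∑ i, p i * h i = c := by
  have hterm (i : ι) : p i * h i = p i * c := by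
    rcases (hp i).lt_or_eq with hpi | hpi
    · rw [hc i hpi]
    · rw [← hpi, zero_mul, zero_mul]
  simp only [hterm, ← sum_mul, hsum, one_mul]

lemma sum_mul_sq_sub_sq_sum_mul_nonneg (hp : ∀ i, 0 ≤ p i) (hsum : ∑ i, p i = 1)
    (h : ι → ℝ) :
    0 ≤ ∑ i, p i * h i ^ 2 - (∑ i, p i * h i) ^ 2 := by
  rw [sum_mul_sq_sub_sq_sum_mul hsum]
  exact sum_nonneg fun i _ => mul_nonneg (hp i) (sq_nonneg _)

lemma sum_mul_sq_sub_sq_sum_mul_eq_zero_iff (hp : ∀ i, 0 ≤ p i) (hsum : ∑ i, p i = 1)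
    (h : ι → ℝ) :
    ∑ i, p i * h i ^ 2 - (∑ i, p i * h i) ^ 2 = 0 ↔
      ∀ i j, 0 < p i → 0 < p j → h i = h j := by
  rw [sum_mul_sq_sub_sq_sum_mul hsum, sum_mul_sq_sub_eq_zero_iff hp]
  refine ⟨fun hm i j hi hj => (hm i hi).trans (hm j hj).symm, fun hconst i hi => ?_⟩
  exact (sum_mul_eq_of_forall_pos hp hsum fun j hj => hconst j i hj hi).symm

end WeightedVariance

section HarmonicMeanSum

variable {ι E : Type*} [DecidableEq ι] {p : ι → ℝ}

lemma harmonic_mul_norm_sq_nonneg [SeminormedAddGroup E] (hp : ∀ i, 0 ≤ p i)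
    (x : ι → ι → E) (i j : ι) :
    0 ≤ if i ≠ j ∧ 0 < p i + p j then p i * p j / (p i + p j) * ‖x i j‖ ^ 2 else 0 := by
  have := hp i; have := hp j
  split_ifs <;> positivity

lemma sum_harmonic_mul_norm_sq_nonneg [Fintype ι] [SeminormedAddGroup E] (hp : ∀ i, 0 ≤ p i)
    (x : ι → ι → E) :
    0 ≤ ∑ i, ∑ j,
      (if i ≠ j ∧ 0 < p i + p j then p i * p j / (p i + p j) * ‖x i j‖ ^ 2 else 0) :=
  sum_nonneg fun i _ => sum_nonneg fun j _ => harmonic_mul_norm_sq_nonneg hp x i j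

lemma sum_harmonic_mul_norm_sq_eq_zero_iff [Fintype ι] [NormedAddGroup E] (hp : ∀ i, 0 ≤ p i)
    (x : ι → ι → E) :
    ∑ i, ∑ j,
        (if i ≠ j ∧ 0 < p i + p j then p i * p j / (p i + p j) * ‖x i j‖ ^ 2 else 0) = 0 ↔
      ∀ i j, i ≠ j → 0 < p i → 0 < p j → x i j = 0 := by
  have hterm := harmonic_mul_norm_sq_nonneg hp x
  rw [Fintype.sum_eq_zero_iff_of_nonneg fun i => sum_nonneg fun j _ => hterm i j, funext_iff]
  refine forall_congr' fun i => ?_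
  rw [Pi.zero_apply, Fintype.sum_eq_zero_iff_of_nonneg (hterm i), funext_iff]
  refine forall_congr' fun j => ?_
  rcases (hp i).eq_or_lt with hi | hi
  · simp [← hi]
  rcases (hp j).eq_or_lt with hj | hj
  · simp [← hj]
  simp [hi, hj, add_pos hi hj, hi.ne', hj.ne', (add_pos hi hj).ne']

end HarmonicMeanSum

lemma sum_eq_one_of_trace_sum_smul_vecMulVec {ι n : Type*} [Fintype ι] [Fintype n]
    {v : ι → n → ℂ} (hnorm : ∀ i, star (v i) ⬝ᵥ v i = 1) {p : ι → ℝ}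
    (htr : trace (∑ i, (p i : ℂ) • vecMulVec (v i) (star (v i))) = 1) : ∑ i, p i = 1 := by
  simp only [trace_sum, trace_smul, trace_vecMulVec, dotProduct_comm (v _), hnorm,
    smul_eq_mul, mul_one] at htr
  exact_mod_cast htr

section Frame

variable {d : ℕ} {p : Fin d → ℝ} {v : Fin d → Fin d → ℂ}

lemma matElem_sum {ι : Type*} (S : Finset ι) (H : ι → Matrix (Fin d) (Fin d) ℂ)
    (u w : Fin d → ℂ) :
    matElem (∑ i ∈ S, H i) u w = ∑ i ∈ S, matElem (H i) u w := by
  simp [matElem, sum_mulVec, dotProduct_sum]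

lemma matElem_smul (c : ℂ) (H : Matrix (Fin d) (Fin d) ℂ) (u w : Fin d → ℂ) :
    matElem (c • H) u w = c * matElem H u w := by
  simp [matElem, smul_mulVec]

lemma matElem_vecMulVec (a b u w : Fin d → ℂ) :
    matElem (vecMulVec a (star b)) u w = (star u ⬝ᵥ a) * (star b ⬝ᵥ w) := by
  simp [matElem, vecMulVec_mulVec, mul_comm]

lemma matElem_sum_smul_vecMulVec
    (hortho : ∀ i j, star (v i) ⬝ᵥ v j = if i = j then 1 else 0)
    {S : Finset (Fin d)} (a : Fin d → Fin d → ℂ) {k l : Fin d} (hk : k ∈ S) (hl : l ∈ S) :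
    matElem (∑ i ∈ S, ∑ j ∈ S, a i j • vecMulVec (v i) (star (v j))) (v k) (v l) =
      a k l := by
  simp [matElem_sum, matElem_smul, matElem_vecMulVec, hortho, hk, hl]

lemma sum_smul_vecMulVec_inj
    (hortho : ∀ i j, star (v i) ⬝ᵥ v j = if i = j then 1 else 0)
    {S : Finset (Fin d)} {a b : Fin d → Fin d → ℂ} :
    ∑ i ∈ S, ∑ j ∈ S, a i j • vecMulVec (v i) (star (v j)) =
        ∑ i ∈ S, ∑ j ∈ S, b i j • vecMulVec (v i) (star (v j)) ↔
      ∀ k ∈ S, ∀ l ∈ S, a k l = b k l := by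
  refine ⟨fun h k hk l hl => ?_, fun h =>
    sum_congr rfl fun k hk => sum_congr rfl fun l hl => by rw [h k hk l hl]⟩
  rw [← matElem_sum_smul_vecMulVec hortho a hk hl, h,
    matElem_sum_smul_vecMulVec hortho b hk hl]

lemma vecMulVec_mul_mul_vecMulVec (a b : Fin d → ℂ) (H : Matrix (Fin d) (Fin d) ℂ) :
    vecMulVec a (star a) * H * vecMulVec b (star b) = matElem H a b • vecMulVec a (star b) := by
  rw [vecMulVec_mul, vecMulVec_mul_vecMulVec, vecMulVec_smul, matElem, dotProduct_mulVec]

lemma suppProj_mul_mul_suppProj (p : Fin d → ℝ) (v : Fin d → Fin d → ℂ)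
    (H : Matrix (Fin d) (Fin d) ℂ) :
    suppProj p v * H * suppProj p v =
      ∑ i ∈ univ.filter (fun i => 0 < p i), ∑ j ∈ univ.filter (fun i => 0 < p i),
        matElem H (v i) (v j) • vecMulVec (v i) (star (v j)) := by
  simp only [suppProj, sum_mul, mul_sum, vecMulVec_mul_mul_vecMulVec]
  exact sum_comm

lemma smul_suppProj (p : Fin d → ℝ) (v : Fin d → Fin d → ℂ) (c : ℂ) :
    c • suppProj p v =
      ∑ i ∈ univ.filter (fun i => 0 < p i), ∑ j ∈ univ.filter (fun i => 0 < p i),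
        (if i = j then c else 0) • vecMulVec (v i) (star (v j)) := by
  rw [suppProj, smul_sum]
  refine sum_congr rfl fun i hi => ?_
  simp [ite_smul, hi]

lemma suppProj_mul_mul_suppProj_eq_smul_iff
    (hortho : ∀ i j, star (v i) ⬝ᵥ v j = if i = j then 1 else 0)
    (H : Matrix (Fin d) (Fin d) ℂ) (c : ℂ) :
    suppProj p v * H * suppProj p v = c • suppProj p v ↔
      ∀ k l, 0 < p k → 0 < p l → matElem H (v k) (v l) = if k = l then c else 0 := by
  rw [suppProj_mul_mul_suppProj, smul_suppProj, sum_smul_vecMulVec_inj hortho]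
  simp only [mem_filter, mem_univ, true_and]
  exact ⟨fun h k l hk hl => h k hk l hl, fun h k hk l hl => h k l hk hl⟩

lemma ofReal_re_matElem_self {H : Matrix (Fin d) (Fin d) ℂ} (hH : H.IsHermitian)
    (u : Fin d → ℂ) : ((matElem H u u).re : ℂ) = matElem H u u :=
  Complex.ext rfl (by simpa [matElem] using (hH.im_star_dotProduct_mulVec_self u).symm)

end Frame

section Gap

variable {d : ℕ} {p : Fin d → ℝ}

lemma gapD_nonneg (hp : ∀ i, 0 ≤ p i) (hsum : ∑ i, p i = 1) (v : Fin d → Fin d → ℂ)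
    (H : Matrix (Fin d) (Fin d) ℂ) : 0 ≤ gapD p v H := by
  have hoff := sum_harmonic_mul_norm_sq_nonneg hp fun i j => matElem H (v i) (v j)
  have hvar := sum_mul_sq_sub_sq_sum_mul_nonneg hp hsum fun i => (matElem H (v i) (v i)).re
  rw [gapD]
  positivity

lemma gapD_eq_zero_iff (hp : ∀ i, 0 ≤ p i) (hsum : ∑ i, p i = 1) (v : Fin d → Fin d → ℂ)
    {H : Matrix (Fin d) (Fin d) ℂ} (hH : H.IsHermitian) :
    gapD p v H = 0 ↔
      (∀ i j, i ≠ j → 0 < p i → 0 < p j → matElem H (v i) (v j) = 0) ∧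
      (∀ i j, 0 < p i → 0 < p j → matElem H (v i) (v i) = matElem H (v j) (v j)) := by
  have hoff := sum_harmonic_mul_norm_sq_nonneg hp fun i j => matElem H (v i) (v j)
  have hvar := sum_mul_sq_sub_sq_sum_mul_nonneg hp hsum fun i => (matElem H (v i) (v i)).re
  rw [gapD, add_eq_zero_iff_of_nonneg (by positivity) hvar, mul_eq_zero,
    or_iff_right two_ne_zero, sum_harmonic_mul_norm_sq_eq_zero_iff hp,
    sum_mul_sq_sub_sq_sum_mul_eq_zero_iff hp hsum]
  refine and_congr_right' (forall₄_congr fun i j _ _ => ⟨fun h => ?_, congrArg Complex.re⟩)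
  rw [← ofReal_re_matElem_self hH, h, ofReal_re_matElem_self hH]

lemma exists_suppProj_mul_mul_suppProj_eq_smul_iff {v : Fin d → Fin d → ℂ}
    (hortho : ∀ i j, star (v i) ⬝ᵥ v j = if i = j then 1 else 0)
    {H : Matrix (Fin d) (Fin d) ℂ} (hH : H.IsHermitian) :
    (∃ c : ℝ, suppProj p v * H * suppProj p v = (c : ℂ) • suppProj p v) ↔
      (∀ i j, i ≠ j → 0 < p i → 0 < p j → matElem H (v i) (v j) = 0) ∧
      (∀ i j, 0 < p i → 0 < p j → matElem H (v i) (v i) = matElem H (v j) (v j)) := by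
  simp_rw [suppProj_mul_mul_suppProj_eq_smul_iff hortho]
  constructor
  · rintro ⟨c, hc⟩
    refine ⟨fun i j hij hi hj => by simpa [hij] using hc i j hi hj, fun i j hi hj => ?_⟩
    rw [hc i i hi hi, hc j j hj hj, if_pos rfl, if_pos rfl]
  · rintro ⟨hoff, hdiag⟩
    by_cases hsupp : ∃ i₀, 0 < p i₀
    · obtain ⟨i₀, hi₀⟩ := hsupp
      refine ⟨(matElem H (v i₀) (v i₀)).re, fun k l hk hl => ?_⟩
      split_ifs with hkl
      · rw [ofReal_re_matElem_self hH, ← hkl, hdiag k i₀ hk hi₀]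
      · exact hoff k l hkl hk hl
    · exact ⟨0, fun k _ hk => absurd ⟨k, hk⟩ hsupp⟩

end Gap

theorem stmt5_general (d : ℕ) (p : Fin d → ℝ) (v : Fin d → Fin d → ℂ)
    (ρ H : Matrix (Fin d) (Fin d) ℂ)
    (htr : ρ.trace = 1)
    (hortho : ∀ i j, dotProduct (star (v i)) (v j) = if i = j then 1 else 0)
    (hp : ∀ i, 0 ≤ p i)
    (hspec : ρ = ∑ i, (p i : ℂ) • Matrix.vecMulVec (v i) (star (v i)))
    (hH : H.IsHermitian) :
    0 ≤ gapD p v H ∧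
    (gapD p v H = 0 ↔
      ∃ c : ℝ, suppProj p v * H * suppProj p v = (c : ℂ) • suppProj p v) ∧
    (gapD p v H = 0 ↔
      (∀ i j, i ≠ j → 0 < p i → 0 < p j → matElem H (v i) (v j) = 0) ∧
      (∀ i j, 0 < p i → 0 < p j → matElem H (v i) (v i) = matElem H (v j) (v j))) := by
  have hsum : ∑ i, p i = 1 :=
    sum_eq_one_of_trace_sum_smul_vecMulVec (fun i => by simpa using hortho i i) (hspec ▸ htr)
  have hzero := gapD_eq_zero_iff hp hsum v hH
  exact ⟨gapD_nonneg hp hsum v H,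
    hzero.trans (exists_suppProj_mul_mul_suppProj_eq_smul_iff hortho hH).symm, hzero⟩

/-- For a density matrix `ρ = Σ_i p i |v i⟩⟨v i|` (positive semidefinite,
trace one, with orthonormal eigenbasis `v` and eigenvalues `p i ≥ 0`) and a Hermitian
matrix `H`, the gap `D ≥ 0`, and `D = 0` iff `Π H Π = c Π` for some real `c`, iff the
off-diagonal elements of `H` on the support vanish and the diagonal elements on the
support are constant. -/
theorem stmt5 (d : ℕ) (p : Fin d → ℝ) (v : Fin d → Fin d → ℂ)
    (ρ H : Matrix (Fin d) (Fin d) ℂ)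
    (hρ : ρ.PosSemidef) (htr : ρ.trace = 1)
    (hortho : ∀ i j, dotProduct (star (v i)) (v j) = if i = j then 1 else 0)
    (hp : ∀ i, 0 ≤ p i)
    (hspec : ρ = ∑ i, (p i : ℂ) • Matrix.vecMulVec (v i) (star (v i)))
    (hH : H.IsHermitian) :
    0 ≤ gapD p v H ∧
    (gapD p v H = 0 ↔
      ∃ c : ℝ, suppProj p v * H * suppProj p v = (c : ℂ) • suppProj p v) ∧
    (gapD p v H = 0 ↔
      (∀ i j, i ≠ j → 0 < p i → 0 < p j → matElem H (v i) (v j) = 0) ∧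
      (∀ i j, 0 < p i → 0 < p j → matElem H (v i) (v i) = matElem H (v j) (v j))) :=
  stmt5_general d p v ρ H htr hortho hp hspec hH
end

section
/- Let ρ be a d×d complex positive semidefinite matrix with tr ρ = 1 and let H be a d×d Hermitian matrix. Let {u_k}_{k=1}^d be an orthonormal basis of ℂ^d such that ⟨u_k| (√ρ H √ρ − tr(ρH) ρ) |u_k⟩ = 0 for every k. Define q_k := ⟨u_k| ρ |u_k⟩ and w_k := √ρ u_k (so that ‖w_k‖² = q_k and Σ_k |w_k⟩⟨w_k| = ρ). Then: (i) ⟨w_k| H |w_k⟩ = q_k · tr(ρH) for every k; and (ii) for the normalised vectors ψ_k := w_k/√q_k defined whenever q_k > 0, one has Σ_{k : q_k>0} q_k (⟨ψ_k|H²|ψ_k⟩ − ⟨ψ_k|H|ψ_k⟩²) = tr(ρH²) − tr(ρH)². -/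
/-!
Since `√ρ` is Hermitian, `⟨w_k|A|w_k⟩ = ⟨u_k|√ρ A √ρ|u_k⟩` for every matrix `A`. With `A = 1` this
gives `‖w_k‖² = q_k`, with `A = H` the vanishing diagonal gives `⟨w_k|H|w_k⟩ = q_k tr(ρH)`, and
completeness of the basis gives `Σ_k |w_k⟩⟨w_k| = √ρ √ρ = ρ`. Each normalised `ψ_k` then has mean
exactly `tr(ρH)`, so the average of the pure variances is
`Σ_k ⟨w_k|H²|w_k⟩ − tr(ρH)² Σ_k q_k = tr(ρH²) − tr(ρH)²`.
-/

open scoped ComplexOrder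

/-- The square root of a positive semidefinite matrix, as `Matrix.PosSemidef.sqrt` was defined
in older Mathlib (removed since). -/
noncomputable def Matrix.PosSemidef.sqrt {n : Type*} [Fintype n] [DecidableEq n]
    {A : Matrix n n ℂ} (hA : A.PosSemidef) : Matrix n n ℂ :=
  hA.1.eigenvectorUnitary.1 * Matrix.diagonal ((↑) ∘ (√·) ∘ hA.1.eigenvalues) *
    (star hA.1.eigenvectorUnitary : Matrix n n ℂ)

/-- The variance `⟨ψ|H²|ψ⟩ − ⟨ψ|H|ψ⟩²` of a Hermitian observable `H` in a pure state `ψ`. -/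
noncomputable def pureVar {d : ℕ} (H : Matrix (Fin d) (Fin d) ℂ) (ψ : Fin d → ℂ) : ℝ :=
  (dotProduct (star ψ) ((H * H).mulVec ψ)).re -
    ((dotProduct (star ψ) (H.mulVec ψ)).re) ^ 2

namespace Matrix.PosSemidef

variable {n : Type*} [Fintype n] [DecidableEq n] {A : Matrix n n ℂ}

theorem sqrt_isHermitian (hA : A.PosSemidef) : hA.sqrt.IsHermitian :=
  isHermitian_mul_mul_conjTranspose _ <|
    isHermitian_diagonal_of_self_adjoint _ <| by ext i; simp

theorem sqrt_mul_self (hA : A.PosSemidef) : hA.sqrt * hA.sqrt = A := by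
  have hsq : diagonal ((↑) ∘ (√·) ∘ hA.1.eigenvalues) * diagonal ((↑) ∘ (√·) ∘ hA.1.eigenvalues)
      = diagonal (RCLike.ofReal ∘ hA.1.eigenvalues : n → ℂ) := by
    rw [diagonal_mul_diagonal]
    congr 1; funext i
    simp [← Complex.ofReal_mul, Real.mul_self_sqrt (hA.eigenvalues_nonneg i)]
  -- `hA.sqrt` is by definition the conjugate of the diagonal square root by the eigenvector unitary
  conv_rhs => rw [hA.1.spectral_theorem, ← hsq, map_mul]
  rfl

end Matrix.PosSemidef

namespace Matrix

variable {n R : Type*} [Fintype n] [CommRing R] [StarRing R]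

theorem sum_vecMulVec_star_eq_one [DecidableEq n] {u : n → n → R}
    (hu : ∀ k l, star (u k) ⬝ᵥ u l = if k = l then 1 else 0) :
    ∑ k, vecMulVec (u k) (star (u k)) = 1 := by
  have hleft : (of u)ᵀᴴ * (of u)ᵀ = 1 := by
    ext k l
    simpa [mul_apply, one_apply, dotProduct] using hu k l
  rw [← mul_eq_one_comm.mp hleft]
  ext i j
  simp [sum_apply, mul_apply, vecMulVec_apply]

theorem sum_star_dotProduct_mulVec {ι : Type*} [Fintype ι] (A : Matrix n n R) (w : ι → n → R) :
    ∑ k, star (w k) ⬝ᵥ A *ᵥ w k = trace (A * ∑ k, vecMulVec (w k) (star (w k))) := by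
  simp [Finset.mul_sum, trace_sum, mul_vecMulVec, dotProduct_comm]

theorem vecMulVec_mulVec_star (S : Matrix n n R) (v : n → R) :
    vecMulVec (S *ᵥ v) (star (S *ᵥ v)) = S * vecMulVec v (star v) * Sᴴ := by
  rw [mul_vecMulVec, vecMulVec_mul, star_mulVec]

theorem star_mulVec_dotProduct_mulVec_mulVec (S A : Matrix n n R) (v : n → R) :
    star (S *ᵥ v) ⬝ᵥ A *ᵥ (S *ᵥ v) = star v ⬝ᵥ (Sᴴ * A * S) *ᵥ v := by
  rw [star_mulVec, ← dotProduct_mulVec, mulVec_mulVec, mulVec_mulVec, Matrix.mul_assoc]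

theorem IsHermitian.ofReal_re_star_dotProduct_mulVec_self {A : Matrix n n ℂ} (hA : A.IsHermitian)
    (v : n → ℂ) : ((star v ⬝ᵥ A *ᵥ v).re : ℂ) = star v ⬝ᵥ A *ᵥ v :=
  Complex.ext (by simp) (by simpa using (hA.im_star_dotProduct_mulVec_self v).symm)

end Matrix

open Matrix

theorem mul_pureVar_inv_sqrt_smul {d : ℕ} (H : Matrix (Fin d) (Fin d) ℂ) (w : Fin d → ℂ) {q : ℝ}
    (hq : 0 < q) :
    q * pureVar H ((((√q)⁻¹ : ℝ) : ℂ) • w) =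
      (star w ⬝ᵥ (H * H) *ᵥ w).re - (star w ⬝ᵥ H *ᵥ w).re ^ 2 / q := by
  have hscale : ∀ A : Matrix (Fin d) (Fin d) ℂ,
      (star ((((√q)⁻¹ : ℝ) : ℂ) • w) ⬝ᵥ A *ᵥ ((((√q)⁻¹ : ℝ) : ℂ) • w)).re =
        (star w ⬝ᵥ A *ᵥ w).re / q := by
    intro A
    simp only [star_smul, mulVec_smul, smul_dotProduct, dotProduct_smul, smul_eq_mul,
      Complex.star_def, Complex.conj_ofReal, ← mul_assoc, ← Complex.ofReal_mul, ← mul_inv,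
      Real.mul_self_sqrt hq.le, Complex.re_ofReal_mul, div_eq_inv_mul]
  rw [pureVar, hscale, hscale]
  field_simp

theorem sum_filter_mul_pureVar_eq {d : ℕ} {ι : Type*} [Fintype ι] {ρ : Matrix (Fin d) (Fin d) ℂ}
    (H : Matrix (Fin d) (Fin d) ℂ) (htr : ρ.trace = 1) {q : ι → ℝ} {w : ι → Fin d → ℂ}
    (hnorm : ∀ k, star (w k) ⬝ᵥ w k = q k)
    (hdecomp : ∑ k, vecMulVec (w k) (star (w k)) = ρ)
    (hmean : ∀ k, star (w k) ⬝ᵥ H *ᵥ w k = q k * (ρ * H).trace) :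
    ∑ k ∈ Finset.univ.filter (fun k => 0 < q k),
        q k * pureVar H ((((√(q k))⁻¹ : ℝ) : ℂ) • w k) =
      (ρ * H * H).trace.re - (ρ * H).trace.re ^ 2 := by
  set t := (ρ * H).trace
  have hsum_trace : ∀ A, ∑ k, star (w k) ⬝ᵥ A *ᵥ w k = (ρ * A).trace := fun A => by
    rw [sum_star_dotProduct_mulVec, hdecomp, trace_mul_comm]
  have hsum_q : ∑ k, q k = 1 := by
    simpa [hnorm, htr] using congrArg Complex.re (hsum_trace 1)
  have hterm : ∀ k, 0 < q k → q k * pureVar H ((((√(q k))⁻¹ : ℝ) : ℂ) • w k) =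
      (star (w k) ⬝ᵥ (H * H) *ᵥ w k).re - q k * t.re ^ 2 := fun k hk => by
    rw [mul_pureVar_inv_sqrt_smul H (w k) hk, hmean, Complex.re_ofReal_mul]
    field_simp
  have hpos : ∀ k, (star (w k) ⬝ᵥ (H * H) *ᵥ w k).re - q k * t.re ^ 2 ≠ 0 → 0 < q k := by
    intro k hk
    refine (Complex.zero_le_real.mp (hnorm k ▸ dotProduct_star_self_nonneg (w k))).lt_of_ne ?_
    intro hq0
    have hw0 : w k = 0 := dotProduct_star_self_eq_zero.mp (by rw [hnorm, ← hq0]; simp)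
    simp [hw0, ← hq0] at hk
  rw [Finset.sum_congr rfl fun k hk => hterm k (Finset.mem_filter.mp hk).2,
    Finset.sum_filter_of_ne fun k _ => hpos k, Finset.sum_sub_distrib, ← Finset.sum_mul, hsum_q,
    ← Complex.re_sum, hsum_trace, Matrix.mul_assoc]
  ring

theorem stmt7_general (d : ℕ) (ρ H : Matrix (Fin d) (Fin d) ℂ)
    (hρ : ρ.PosSemidef) (htr : ρ.trace = 1)
    (u : Fin d → Fin d → ℂ)
    (hortho : ∀ k l, dotProduct (star (u k)) (u l) = if k = l then 1 else 0)
    (hdiag : ∀ k, dotProduct (star (u k))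
      ((hρ.sqrt * H * hρ.sqrt - (ρ * H).trace • ρ).mulVec (u k)) = 0)
    (q : Fin d → ℝ)
    (hq : ∀ k, q k = (dotProduct (star (u k)) (ρ.mulVec (u k))).re)
    (w : Fin d → Fin d → ℂ)
    (hw : ∀ k, w k = hρ.sqrt.mulVec (u k)) :
    (∀ k, dotProduct (star (w k)) (w k) = (q k : ℂ)) ∧
    (∑ k, Matrix.vecMulVec (w k) (star (w k)) = ρ) ∧
    (∀ k, dotProduct (star (w k)) (H.mulVec (w k)) = (q k : ℂ) * (ρ * H).trace) ∧
    (∑ k ∈ Finset.univ.filter (fun k => 0 < q k),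
        q k * pureVar H ((((Real.sqrt (q k))⁻¹ : ℝ) : ℂ) • w k) =
      (ρ * H * H).trace.re - ((ρ * H).trace.re) ^ 2) := by
  have hS := hρ.sqrt_isHermitian
  have hconj : ∀ A k, star (w k) ⬝ᵥ A *ᵥ w k = star (u k) ⬝ᵥ (hρ.sqrt * A * hρ.sqrt) *ᵥ u k :=
    fun A k => by rw [hw, star_mulVec_dotProduct_mulVec_mulVec, hS.eq]
  have hqρ : ∀ k, star (u k) ⬝ᵥ ρ *ᵥ u k = q k := fun k => by
    rw [hq, hρ.isHermitian.ofReal_re_star_dotProduct_mulVec_self]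
  have hnorm : ∀ k, star (w k) ⬝ᵥ w k = q k := fun k => by
    simpa [hρ.sqrt_mul_self, hqρ] using hconj 1 k
  have hdecomp : ∑ k, vecMulVec (w k) (star (w k)) = ρ := by
    simp_rw [hw, vecMulVec_mulVec_star]
    rw [← Finset.sum_mul, ← Finset.mul_sum, sum_vecMulVec_star_eq_one hortho, Matrix.mul_one,
      hS.eq, hρ.sqrt_mul_self]
  have hmean : ∀ k, star (w k) ⬝ᵥ H *ᵥ w k = q k * (ρ * H).trace := fun k => by
    have hk := hdiag k
    rw [sub_mulVec, dotProduct_sub, sub_eq_zero] at hk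
    rw [hconj, hk, smul_mulVec, dotProduct_smul, hqρ, smul_eq_mul, mul_comm]
  exact ⟨hnorm, hdecomp, hmean, sum_filter_mul_pureVar_eq H htr hnorm hdecomp hmean⟩

/-- Given a density matrix `ρ`, a Hermitian `H`, and an orthonormal basis
`u` of `ℂ^d` on which the diagonal elements of `√ρ H √ρ − tr(ρH) ρ` vanish, the vectors
`w k = √ρ (u k)` satisfy `‖w k‖² = q k`, `Σ_k |w k⟩⟨w k| = ρ`,
`⟨w k|H|w k⟩ = q k · tr(ρH)`, and the normalised states `ψ k = w k / √(q k)` (for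
`q k > 0`) form an ensemble whose average variance equals the variance of `ρ`. -/
theorem stmt7 (d : ℕ) (ρ H : Matrix (Fin d) (Fin d) ℂ)
    (hρ : ρ.PosSemidef) (htr : ρ.trace = 1) (hH : H.IsHermitian)
    (u : Fin d → Fin d → ℂ)
    (hortho : ∀ k l, dotProduct (star (u k)) (u l) = if k = l then 1 else 0)
    (hdiag : ∀ k, dotProduct (star (u k))
      ((hρ.sqrt * H * hρ.sqrt - (ρ * H).trace • ρ).mulVec (u k)) = 0)
    (q : Fin d → ℝ)
    (hq : ∀ k, q k = (dotProduct (star (u k)) (ρ.mulVec (u k))).re)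
    (w : Fin d → Fin d → ℂ)
    (hw : ∀ k, w k = hρ.sqrt.mulVec (u k)) :
    (∀ k, dotProduct (star (w k)) (w k) = (q k : ℂ)) ∧
    (∑ k, Matrix.vecMulVec (w k) (star (w k)) = ρ) ∧
    (∀ k, dotProduct (star (w k)) (H.mulVec (w k)) = (q k : ℂ) * (ρ * H).trace) ∧
    (∑ k ∈ Finset.univ.filter (fun k => 0 < q k),
        q k * pureVar H ((((Real.sqrt (q k))⁻¹ : ℝ) : ℂ) • w k) =
      (ρ * H * H).trace.re - ((ρ * H).trace.re) ^ 2) :=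
  stmt7_general d ρ H hρ htr u hortho hdiag q hq w hw
end

section
/- Let d ≥ 1, let ρ be a d×d complex positive semidefinite matrix with tr ρ = 1 and eigenvalues p_1, …, p_d, and let H_1, …, H_{d²−1} be d×d Hermitian matrices satisfying tr H_i = 0 and tr(H_i H_j) = δ_{ij} for all i, j. Then Σ_{i=1}^{d²−1} (tr(ρH_i²) − tr(ρH_i)²) = d − tr(ρ²) = (d − 1) + Σ_{i≠j} p_i p_j. -/
/-!
Adjoining `(√d)⁻¹ • 1` to the traceless `H i` gives `d²` matrices that are orthonormal for the
pairing `(A, B) ↦ tr (A B)`, hence a basis of all `d × d` matrices. Expanding in this basis yields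
the completeness relations `∑ H i ^ 2 = (d - d⁻¹) • 1` and `∑ tr (ρ H i) ^ 2 = tr ρ² - d⁻¹ (tr ρ)²`,
whose difference is the variance sum. The second equality is `tr ρ² = ∑ p i ^ 2` with `∑ p i = 1`.
-/

open scoped ComplexOrder

lemma Finset.sum_sum_ite_ne_mul {R ι : Type*} [CommRing R] [Fintype ι] [DecidableEq ι]
    (f : ι → R) :
    ∑ i, ∑ j, (if i ≠ j then f i * f j else 0) = (∑ i, f i) ^ 2 - ∑ i, f i ^ 2 := by
  simp_rw [← sum_filter, filter_ne, sum_erase_eq_sub (mem_univ _), sum_sub_distrib, sq,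
    sum_mul_sum]

lemma IsAlgClosed.exists_mul_self_mul_eq_one {K : Type*} [Field K] [IsAlgClosed K] {x : K}
    (hx : x ≠ 0) : ∃ c : K, c * c * x = 1 := by
  obtain ⟨c, hc⟩ := IsAlgClosed.exists_eq_mul_self x⁻¹
  exact ⟨c, by rw [← hc, inv_mul_cancel₀ hx]⟩

namespace Matrix

lemma IsHermitian.star_trace_mul {R n : Type*} [CommRing R] [StarRing R] [Fintype n]
    {A B : Matrix n n R} (hA : A.IsHermitian) (hB : B.IsHermitian) :
    star (A * B).trace = (A * B).trace := by
  rw [← trace_conjTranspose, conjTranspose_mul, hA.eq, hB.eq, trace_mul_comm]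

lemma IsHermitian.trace_mul_self {𝕜 n : Type*} [RCLike 𝕜] [Fintype n] [DecidableEq n]
    {A : Matrix n n 𝕜} (hA : A.IsHermitian) :
    (A * A).trace = ∑ i, ((hA.eigenvalues i ^ 2 : ℝ) : 𝕜) := by
  conv_lhs => rw [hA.spectral_theorem, ← map_mul, Unitary.conjStarAlgAut_apply, trace_mul_cycle,
    Unitary.coe_star_mul_self, one_mul, diagonal_mul_diagonal, trace_diagonal]
  simp [sq]

variable {K n ι : Type*} [Field K] [Fintype n] [DecidableEq n] [DecidableEq ι]

/-- For Hermitian matrices this is orthonormality for the Hilbert–Schmidt inner product. -/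
def IsTraceOrthonormal (G : ι → Matrix n n K) : Prop :=
  ∀ k l, (G k * G l).trace = if k = l then 1 else 0

namespace IsTraceOrthonormal

lemma option_elim_smul_one {H : ι → Matrix n n K} (hH : IsTraceOrthonormal H)
    (htr : ∀ i, (H i).trace = 0) {c : K} (hc : c * c * Fintype.card n = 1) :
    IsTraceOrthonormal (fun k : Option ι => k.elim (c • 1) H) := by
  rintro (_ | i) (_ | j)
  · simp [← hc, mul_assoc]
  · simp [htr]
  · simp [htr]
  · simpa using hH i j

variable [Fintype ι] {G : ι → Matrix n n K} (hG : IsTraceOrthonormal G)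
include hG

lemma trace_mul_sum_smul (c : ι → K) (j : ι) : (G j * ∑ k, c k • G k).trace = c j := by
  simp [Matrix.mul_sum, trace_sum, trace_smul, hG j]

lemma linearIndependent : LinearIndependent K G :=
  Fintype.linearIndependent_iff.mpr fun c hc j => by
    simpa [hc] using (hG.trace_mul_sum_smul c j).symm

section Complete

variable (hcard : Fintype.card ι = Fintype.card n ^ 2)
include hcard

lemma sum_trace_mul_smul (A : Matrix n n K) : ∑ k, (G k * A).trace • G k = A := by
  have hspan : Submodule.span K (Set.range G) = ⊤ :=
    hG.linearIndependent.span_eq_top_of_card_eq_finrank'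
      (by simp [hcard, sq, Module.finrank_matrix])
  obtain ⟨c, rfl⟩ := (Submodule.mem_span_range_iff_exists_fun K).mp
    (hspan ▸ Submodule.mem_top : A ∈ Submodule.span K (Set.range G))
  simp_rw [hG.trace_mul_sum_smul]

lemma trace_mul_eq_sum (A B : Matrix n n K) :
    (A * B).trace = ∑ k, (G k * A).trace * (G k * B).trace := by
  conv_lhs => rw [← hG.sum_trace_mul_smul hcard B]
  simp [Matrix.mul_sum, trace_sum, trace_smul, trace_mul_comm A, mul_comm]

lemma sum_apply_mul_apply (a b c e : n) :
    ∑ k, G k a b * G k c e = if b = c ∧ a = e then 1 else 0 := by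
  have h := hG.trace_mul_eq_sum hcard (single b a 1) (single e c 1)
  simp only [trace_mul_single, MulOpposite.op_one, one_smul] at h
  rw [← h]
  simp [single]

lemma sum_mul_self : ∑ k, G k * G k = (Fintype.card n : K) • 1 := by
  ext a e
  simp only [sum_apply, mul_apply]
  rw [Finset.sum_comm]
  simp [hG.sum_apply_mul_apply hcard, one_apply]

end Complete

end IsTraceOrthonormal

section Traceless

variable [IsAlgClosed K] [CharZero K] [Fintype ι] {H : ι → Matrix n n K}
  (hH : IsTraceOrthonormal H) (htr : ∀ i, (H i).trace = 0)
  (hcard : Fintype.card ι + 1 = Fintype.card n ^ 2)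
include hH htr hcard

lemma exists_isTraceOrthonormal_option_elim_smul_one :
    ∃ c : K, c * c = (Fintype.card n : K)⁻¹ ∧
      IsTraceOrthonormal (fun k : Option ι => k.elim (c • 1) H) := by
  have hn : (Fintype.card n : K) ≠ 0 := by
    rintro h
    simp [Nat.cast_eq_zero.mp h] at hcard
  obtain ⟨c, hc⟩ := IsAlgClosed.exists_mul_self_mul_eq_one hn
  exact ⟨c, eq_inv_of_mul_eq_one_left hc, hH.option_elim_smul_one htr hc⟩

lemma sum_mul_self_of_trace_eq_zero :
    ∑ i, H i * H i = ((Fintype.card n : K) - (Fintype.card n : K)⁻¹) • 1 := by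
  obtain ⟨c, hc, hG⟩ := exists_isTraceOrthonormal_option_elim_smul_one hH htr hcard
  have h := hG.sum_mul_self (by simp [hcard])
  simp only [Fintype.sum_option, Option.elim_none, Option.elim_some, smul_mul_smul, one_mul,
    hc] at h
  rw [sub_smul, ← h, add_sub_cancel_left]

lemma sum_trace_mul_sq_of_trace_eq_zero (A : Matrix n n K) :
    ∑ i, (H i * A).trace ^ 2 = (A * A).trace - (Fintype.card n : K)⁻¹ * A.trace ^ 2 := by
  obtain ⟨c, hc, hG⟩ := exists_isTraceOrthonormal_option_elim_smul_one hH htr hcard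
  rw [hG.trace_mul_eq_sum (by simp [hcard]) A A, Fintype.sum_option]
  simp [trace_smul, ← hc, sq]
  ring

end Traceless

end Matrix

/-- For a density matrix `ρ` on `ℂ^d` (`d ≥ 1`) with eigenvalues `p i`,
and an orthonormal set of `d² − 1` traceless Hermitian generators `H i`, the total
variance `Σ_i Var[ρ, H i]` equals `d − tr(ρ²)`, which in turn equals
`(d − 1) + Σ_{i ≠ j} p i * p j`. -/
theorem stmt9 (d : ℕ) (hd : 1 ≤ d) (ρ : Matrix (Fin d) (Fin d) ℂ)
    (hρ : ρ.PosSemidef) (htr : ρ.trace = 1)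
    (H : Fin (d ^ 2 - 1) → Matrix (Fin d) (Fin d) ℂ)
    (hHerm : ∀ i, (H i).IsHermitian)
    (htr0 : ∀ i, (H i).trace = 0)
    (hON : ∀ i j, (H i * H j).trace = if i = j then 1 else 0) :
    (∑ i, ((ρ * (H i * H i)).trace.re - ((ρ * H i).trace.re) ^ 2) =
      (d : ℝ) - (ρ * ρ).trace.re) ∧
    ((d : ℝ) - (ρ * ρ).trace.re =
      ((d : ℝ) - 1) + ∑ i, ∑ j,
        if i ≠ j then hρ.1.eigenvalues i * hρ.1.eigenvalues j else 0) := by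
  have hcard : Fintype.card (Fin (d ^ 2 - 1)) + 1 = Fintype.card (Fin d) ^ 2 := by
    simpa using Nat.sub_add_cancel (Nat.one_le_pow 2 d hd)
  have hvar : ∑ i, ((ρ * (H i * H i)).trace - (ρ * H i).trace ^ 2) = d - (ρ * ρ).trace := by
    rw [Finset.sum_sub_distrib, ← Matrix.trace_sum, ← Matrix.mul_sum,
      Matrix.sum_mul_self_of_trace_eq_zero hON htr0 hcard]
    simp_rw [Matrix.trace_mul_comm ρ (H _)]
    rw [Matrix.sum_trace_mul_sq_of_trace_eq_zero hON htr0 hcard]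
    simp [Matrix.trace_smul, htr]
  have hreal : ∀ i, ((ρ * H i).trace).im = 0 :=
    fun i => Complex.conj_eq_iff_im.mp (hρ.1.star_trace_mul (hHerm i))
  refine ⟨by simpa [Complex.re_sum, sq, hreal] using congrArg Complex.re hvar, ?_⟩
  have hsum : ∑ i, hρ.1.eigenvalues i = 1 := by
    have h := hρ.1.trace_eq_sum_eigenvalues
    rw [htr] at h
    simpa [Complex.re_sum] using congrArg Complex.re h.symm
  rw [hρ.1.trace_mul_self, Finset.sum_sum_ite_ne_mul, hsum, Complex.re_sum]
  simp only [Complex.coe_algebraMap, Complex.ofReal_re]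
  ring
end

section
/- Let d ≥ 1, let ψ ∈ ℂ^d be a unit vector, let 0 < p < 1, and set ρ := p |ψ⟩⟨ψ| + ((1−p)/d) I. Let {|ψ_i⟩}_{i=1}^d be any orthonormal basis of ℂ^d with ψ_1 = ψ (so the ψ_i are eigenvectors of ρ with eigenvalues λ_1 = p + (1−p)/d and λ_i = (1−p)/d for i ≥ 2). Then for every d×d Hermitian matrix H, 2 Σ_{i,j=1}^d ((λ_i − λ_j)² / (λ_i + λ_j)) |⟨ψ_i|H|ψ_j⟩|² = (4p² / (p + 2(1−p)/d)) · (⟨ψ|H²|ψ⟩ − ⟨ψ|H|ψ⟩²). -/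
/-!
In the eigenbasis of `ρ` only the pairs `(ψ, ψ_j)` and `(ψ_j, ψ)` with `j ≠ 1` have distinct
eigenvalues, each carrying the weight `p² / (p + 2(1−p)/d)`. Hermiticity makes the two kinds of
pairs contribute equally, and completeness of the basis gives
`Σ_j |⟨ψ|H|ψ_j⟩|² = ⟨ψ|H²|ψ⟩`, from which the `j = 1` term `⟨ψ|H|ψ⟩²` is removed.
-/

open Matrix Finset

section WeightedSum

variable {ι : Type*} [Fintype ι] [DecidableEq ι]

theorem sum_sum_sq_sub_div_add_mul_of_forall_ne_eq {lam : ι → ℝ} {z : ι} {b : ℝ}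
    (hlam : ∀ i ≠ z, lam i = b) {g : ι → ι → ℝ} (hg : ∀ i j, g i j = g j i) :
    ∑ i, ∑ j, (lam i - lam j) ^ 2 / (lam i + lam j) * g i j =
      2 * ((lam z - b) ^ 2 / (lam z + b)) * (∑ j, g z j - g z z) := by
  set K := (lam z - b) ^ 2 / (lam z + b)
  have row_z :
      ∑ j, (lam z - lam j) ^ 2 / (lam z + lam j) * g z j = K * (∑ j, g z j - g z z) := by
    rw [← add_sum_erase _ _ (mem_univ z), sub_self, ← sum_erase_eq_sub (mem_univ z), mul_sum]
    simp only [ne_eq, OfNat.ofNat_ne_zero, not_false_eq_true, zero_pow, zero_div, zero_mul,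
      zero_add]
    exact sum_congr rfl fun j hj => by rw [hlam j (ne_of_mem_erase hj)]
  have row_ne : ∀ i ≠ z, ∑ j, (lam i - lam j) ^ 2 / (lam i + lam j) * g i j = K * g z i := by
    intro i hi
    rw [sum_eq_single z (fun j _ hj => by simp [hlam i hi, hlam j hj]) (by simp), hlam i hi, hg]
    ring
  calc ∑ i, ∑ j, (lam i - lam j) ^ 2 / (lam i + lam j) * g i j
      = K * (∑ j, g z j - g z z) + ∑ i ∈ univ.erase z, K * g z i := by
        rw [← add_sum_erase _ _ (mem_univ z), row_z,
          sum_congr rfl fun i hi => row_ne i (ne_of_mem_erase hi)]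
    _ = 2 * K * (∑ j, g z j - g z z) := by
        rw [← mul_sum, sum_erase_eq_sub (mem_univ z)]; ring

end WeightedSum

section Orthonormal

variable {𝕜 n : Type*} [RCLike 𝕜] [Fintype n]

theorem re_star_dotProduct_self (w : n → 𝕜) : RCLike.re (star w ⬝ᵥ w) = ∑ j, ‖w j‖ ^ 2 := by
  simp only [dotProduct, Pi.star_apply, RCLike.star_def, RCLike.conj_mul, map_sum,
    ← RCLike.ofReal_pow, RCLike.ofReal_re]

theorem sum_norm_sq_star_dotProduct_of_orthonormal [DecidableEq n] {v : n → n → 𝕜}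
    (hv : ∀ i j, star (v i) ⬝ᵥ v j = if i = j then 1 else 0) (u : n → 𝕜) :
    ∑ j, ‖star (v j) ⬝ᵥ u‖ ^ 2 = RCLike.re (star u ⬝ᵥ u) := by
  set B : Matrix n n 𝕜 := of fun j k => star (v j k)
  have hB : B * Bᴴ = 1 := by
    ext i j
    simpa [B, mul_apply, one_apply, dotProduct] using hv i j
  have hB' : Bᴴ * B = 1 := mul_eq_one_comm.mp hB
  calc ∑ j, ‖star (v j) ⬝ᵥ u‖ ^ 2 = ∑ j, ‖(B *ᵥ u) j‖ ^ 2 := rfl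
    _ = RCLike.re (star u ⬝ᵥ u) := by
      rw [← re_star_dotProduct_self, star_mulVec, ← dotProduct_mulVec, mulVec_mulVec, hB',
        one_mulVec]

namespace Matrix.IsHermitian

variable {H : Matrix n n 𝕜}

theorem star_star_dotProduct_mulVec (hH : H.IsHermitian) (a b : n → 𝕜) :
    star (star a ⬝ᵥ H *ᵥ b) = star b ⬝ᵥ H *ᵥ a := by
  rw [← star_dotProduct_star, star_star, star_mulVec, hH.eq, ← dotProduct_mulVec]

theorem norm_sq_star_dotProduct_mulVec_self (hH : H.IsHermitian) (x : n → 𝕜) :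
    ‖star x ⬝ᵥ H *ᵥ x‖ ^ 2 = RCLike.re (star x ⬝ᵥ H *ᵥ x) ^ 2 := by
  rw [RCLike.norm_sq_eq_def, hH.im_star_dotProduct_mulVec_self]
  ring

theorem sum_norm_sq_star_dotProduct_mulVec [DecidableEq n] (hH : H.IsHermitian)
    {v : n → n → 𝕜} (hv : ∀ i j, star (v i) ⬝ᵥ v j = if i = j then 1 else 0) (x : n → 𝕜) :
    ∑ j, ‖star x ⬝ᵥ H *ᵥ v j‖ ^ 2 = RCLike.re (star x ⬝ᵥ (H * H) *ᵥ x) := by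
  simp_rw [← norm_star (star x ⬝ᵥ _), hH.star_star_dotProduct_mulVec,
    sum_norm_sq_star_dotProduct_of_orthonormal hv, star_mulVec, hH.eq, ← dotProduct_mulVec,
    mulVec_mulVec]

end Matrix.IsHermitian

end Orthonormal

theorem stmt10 (d : ℕ) (hd : 1 ≤ d) (ψ : Fin d → ℂ)
    (p : ℝ) (v : Fin d → Fin d → ℂ)
    (hortho : ∀ i j, dotProduct (star (v i)) (v j) = if i = j then 1 else 0)
    (hv0 : v ⟨0, by omega⟩ = ψ)
    (lam : Fin d → ℝ)
    (hlam : lam = fun i => if i = ⟨0, by omega⟩ then p + (1 - p) / d else (1 - p) / d)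
    (H : Matrix (Fin d) (Fin d) ℂ) (hH : H.IsHermitian) :
    2 * ∑ i, ∑ j, ((lam i - lam j) ^ 2 / (lam i + lam j)) *
        ‖dotProduct (star (v i)) (H.mulVec (v j))‖ ^ 2 =
      (4 * p ^ 2 / (p + 2 * (1 - p) / d)) *
        ((dotProduct (star ψ) ((H * H).mulVec ψ)).re -
          ((dotProduct (star ψ) (H.mulVec ψ)).re) ^ 2) := by
  set z : Fin d := ⟨0, by omega⟩
  have hlam_z : lam z = p + (1 - p) / d := by simp [hlam]
  have hlam_ne : ∀ i ≠ z, lam i = (1 - p) / d := fun i hi => by simp [hlam, hi]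
  rw [sum_sum_sq_sub_div_add_mul_of_forall_ne_eq hlam_ne
      (g := fun i j => ‖star (v i) ⬝ᵥ H *ᵥ v j‖ ^ 2)
      (fun i j => by rw [← norm_star, hH.star_star_dotProduct_mulVec]),
    hv0, hH.sum_norm_sq_star_dotProduct_mulVec hortho, hH.norm_sq_star_dotProduct_mulVec_self,
    hlam_z]
  simp only [RCLike.re_to_complex]
  ring
end

section
/- Let ρ be a d×d complex positive semidefinite matrix with tr ρ = 1, let φ ∈ ℂ^{d'} be a unit vector, and let H be a Hermitian matrix acting on ℂ^d ⊗ ℂ^{d'} (identified with dd'×dd' matrices via the Kronecker product). Define the compressed matrices H̃ := (I_d ⊗ ⟨φ|) H (I_d ⊗ |φ⟩) and K := (I_d ⊗ ⟨φ|) H² (I_d ⊗ |φ⟩), which are d×d and with H̃ Hermitian. Then Var[ρ ⊗ |φ⟩⟨φ|, H] = tr[ρ (K − H̃²)] + Var[ρ, H̃], where Var[σ, A] := tr(σA²) − tr(σA)². -/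
/-!
Tracing against `ρ ⊗ |φ⟩⟨φ|` is tracing the compression against `ρ`. Applied to `H` and `H²`,
both sides of the identity become `tr(ρK) − tr(ρH̃)²`.
-/

open scoped ComplexOrder Kronecker

/-- The compression `(I_d ⊗ ⟨φ|) A (I_d ⊗ |φ⟩)` of a matrix `A` on `ℂ^d ⊗ ℂ^{d'}`
by a vector `φ ∈ ℂ^{d'}`. -/
noncomputable def compress {d d' : ℕ} (φ : Fin d' → ℂ)
    (A : Matrix (Fin d × Fin d') (Fin d × Fin d') ℂ) : Matrix (Fin d) (Fin d) ℂ :=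
  Matrix.of fun a b => ∑ x, ∑ y, star (φ x) * A (a, x) (b, y) * φ y

noncomputable def mixVar {n : Type*} [Fintype n] (σ A : Matrix n n ℂ) : ℂ :=
  (σ * (A * A)).trace - ((σ * A).trace) ^ 2

theorem trace_kronecker_vecMulVec_mul {d d' : ℕ} (ρ : Matrix (Fin d) (Fin d) ℂ)
    (φ : Fin d' → ℂ) (A : Matrix (Fin d × Fin d') (Fin d × Fin d') ℂ) :
    ((ρ ⊗ₖ Matrix.vecMulVec φ (star φ)) * A).trace = (ρ * compress φ A).trace := by
  simp only [Matrix.trace, Matrix.diag, Matrix.mul_apply, compress, Matrix.of_apply,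
    Matrix.kroneckerMap_apply, Matrix.vecMulVec_apply, Fintype.sum_prod_type,
    Finset.mul_sum, Pi.star_apply]
  refine Finset.sum_congr rfl fun a _ => ?_
  rw [Finset.sum_comm]
  refine Finset.sum_congr rfl fun b _ => ?_
  rw [Finset.sum_comm]
  exact Finset.sum_congr rfl fun x _ => Finset.sum_congr rfl fun y _ => by ring

theorem stmt14_general (d d' : ℕ) (ρ : Matrix (Fin d) (Fin d) ℂ)
    (φ : Fin d' → ℂ)
    (H : Matrix (Fin d × Fin d') (Fin d × Fin d') ℂ) :
    mixVar (ρ ⊗ₖ Matrix.vecMulVec φ (star φ)) H =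
      (ρ * (compress φ (H * H) - compress φ H * compress φ H)).trace +
        mixVar ρ (compress φ H) := by
  simp only [mixVar, Matrix.mul_sub, Matrix.trace_sub, trace_kronecker_vecMulVec_mul]
  ring

/-- For a density matrix `ρ` on `ℂ^d`, a unit vector `φ ∈ ℂ^{d'}`, a
Hermitian `H` on the tensor product, and the compressions `H̃ = (I⊗⟨φ|)H(I⊗|φ⟩)` and
`K = (I⊗⟨φ|)H²(I⊗|φ⟩)`, one has
`Var[ρ ⊗ |φ⟩⟨φ|, H] = tr[ρ(K − H̃²)] + Var[ρ, H̃]`. -/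
theorem stmt14 (d d' : ℕ) (ρ : Matrix (Fin d) (Fin d) ℂ)
    (hρ : ρ.PosSemidef) (htrρ : ρ.trace = 1)
    (φ : Fin d' → ℂ) (hφ : dotProduct (star φ) φ = 1)
    (H : Matrix (Fin d × Fin d') (Fin d × Fin d') ℂ) (hH : H.IsHermitian) :
    mixVar (ρ ⊗ₖ Matrix.vecMulVec φ (star φ)) H =
      (ρ * (compress φ (H * H) - compress φ H * compress φ H)).trace +
        mixVar ρ (compress φ H) :=
  stmt14_general d d' ρ φ H
end
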